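/- arXiv:2406.07679 — 7 statements merged into one kernel-verified Lean document; each statement's English description precedes it below -/
import Mathlib

section
/- Let d ≥ 1 and let V be a finite set of boxes in ℝ^d. Then the number of subfamilies s ⊆ V that are maximal (under inclusion) among subfamilies of V whose members pairwise intersect is at most |V|^d. (Equivalently, the intersection graph of V has at most |V|^d maximal cliques.) -/
/-- A box in `ℝ^d`: a product of `d` closed intervals of positive length. -/
def IsBox (d : ℕ) (B : Set (Fin d → ℝ)) : Prop :=
  ∃ a b : Fin d → ℝ, (∀ i, a i < b i) ∧ B = Set.Icc a b

open Classical

/-- Canonical lower corner of a box. -/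
noncomputable def boxLb {d : ℕ} (B : Set (Fin d → ℝ)) : Fin d → ℝ :=
  if h : IsBox d B then h.choose else 0

/-- Canonical upper corner of a box. -/
noncomputable def boxUb {d : ℕ} (B : Set (Fin d → ℝ)) : Fin d → ℝ :=
  if h : IsBox d B then h.choose_spec.choose else 0

lemma box_spec {d : ℕ} {B : Set (Fin d → ℝ)} (h : IsBox d B) :
    (∀ i, boxLb B i < boxUb B i) ∧ B = Set.Icc (boxLb B) (boxUb B) := by
  unfold boxLb boxUb
  rw [dif_pos h, dif_pos h]
  exact h.choose_spec.choose_spec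

noncomputable def myArgmin {α : Type*} (s : Finset α) (g : α → ℝ) (hs : s.Nonempty) : α :=
  (s.exists_min_image g hs).choose

lemma myArgmin_mem {α : Type*} (s : Finset α) (g : α → ℝ) (hs : s.Nonempty) :
    myArgmin s g hs ∈ s := (s.exists_min_image g hs).choose_spec.1

lemma myArgmin_le {α : Type*} (s : Finset α) (g : α → ℝ) (hs : s.Nonempty)
    {b : α} (hb : b ∈ s) : g (myArgmin s g hs) ≤ g b :=
  (s.exists_min_image g hs).choose_spec.2 b hb

/-- The "lowest upper corner" point of a family of boxes. -/
noncomputable def boxPt (d : ℕ) (s : Finset (Set (Fin d → ℝ))) (hs : s.Nonempty) :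
    Fin d → ℝ :=
  fun i => boxUb (myArgmin s (fun B => boxUb B i) hs) i

lemma mem_of_boxPt {d : ℕ} {V s : Finset (Set (Fin d → ℝ))}
    (hV : ∀ B ∈ V, IsBox d B) (hsV : s ⊆ V)
    (hpair : ∀ A ∈ s, ∀ B ∈ s, (A ∩ B).Nonempty) (hne : s.Nonempty) :
    ∀ B ∈ s, boxPt d s hne ∈ B := by
  intro B hB
  have hBox := box_spec (hV B (hsV hB))
  rw [hBox.2, Set.mem_Icc]
  constructor
  · intro i
    set C := myArgmin s (fun B => boxUb B i) hne with hC
    have hCs : C ∈ s := myArgmin_mem _ _ _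
    obtain ⟨x, hx⟩ := hpair B hB C hCs
    have hxB : x ∈ B := hx.1
    have hxC : x ∈ C := hx.2
    rw [hBox.2, Set.mem_Icc] at hxB
    have hCBox := box_spec (hV C (hsV hCs))
    rw [hCBox.2, Set.mem_Icc] at hxC
    exact le_trans (hxB.1 i) (hxC.2 i)
  · intro i
    exact myArgmin_le s (fun B => boxUb B i) hne hB

/-- A finite set `V` of boxes in `ℝ^d` has at most `|V|^d` maximal (under inclusion)
pairwise-intersecting subfamilies, i.e., the intersection graph of `V` has at most
`|V|^d` maximal cliques. -/
theorem stmt_4 (d : ℕ) (hd : 1 ≤ d) (V : Finset (Set (Fin d → ℝ)))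
    (hV : ∀ B ∈ V, IsBox d B) :
    Set.ncard {s : Finset (Set (Fin d → ℝ)) | s.Nonempty ∧ s ⊆ V ∧
        (∀ A ∈ s, ∀ B ∈ s, (A ∩ B).Nonempty) ∧
        ∀ t : Finset (Set (Fin d → ℝ)), t ⊆ V →
          (∀ A ∈ t, ∀ B ∈ t, (A ∩ B).Nonempty) → s ⊆ t → s = t} ≤
      V.card ^ d := by
  classical
  set S : Set (Finset (Set (Fin d → ℝ))) := {s | s.Nonempty ∧ s ⊆ V ∧
      (∀ A ∈ s, ∀ B ∈ s, (A ∩ B).Nonempty) ∧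
      ∀ t : Finset (Set (Fin d → ℝ)), t ⊆ V →
        (∀ A ∈ t, ∀ B ∈ t, (A ∩ B).Nonempty) → s ⊆ t → s = t} with hSdef
  have recover : ∀ (s) (hs : s ∈ S),
      s = V.filter (fun B => boxPt d s hs.1 ∈ B) := by
    intro s hs
    obtain ⟨hne, hsV, hpair, hmax⟩ := hs
    apply hmax
    · exact Finset.filter_subset _ _
    · intro A hA B hB
      rw [Finset.mem_filter] at hA hB
      exact ⟨boxPt d s hne, hA.2, hB.2⟩
    · intro B hB
      rw [Finset.mem_filter]
      exact ⟨hsV hB, mem_of_boxPt hV hsV hpair hne B hB⟩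
  let F : S → (Fin d → ↥V) := fun s i =>
    ⟨myArgmin s.1 (fun B => boxUb B i) s.2.1, s.2.2.1 (myArgmin_mem _ _ _)⟩
  have hinj : Function.Injective F := by
    intro s t h
    have hp : boxPt d s.1 s.2.1 = boxPt d t.1 t.2.1 := by
      funext i
      have h1 : F s i = F t i := congrFun h i
      have h2 : myArgmin s.1 (fun B => boxUb B i) s.2.1
          = myArgmin t.1 (fun B => boxUb B i) t.2.1 := congrArg Subtype.val h1
      simp only [boxPt, h2]
    apply Subtype.ext
    rw [recover s.1 s.2, recover t.1 t.2, hp]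
  have hcard : Nat.card S ≤ Nat.card (Fin d → ↥V) :=
    Nat.card_le_card_of_injective F hinj
  calc S.ncard = Nat.card S := (Nat.card_coe_set_eq S).symm
    _ ≤ Nat.card (Fin d → ↥V) := hcard
    _ = V.card ^ d := by
        simp [Nat.card_eq_fintype_card, Fintype.card_fun]
end

section
/- Let d ≥ 1, let X be a finite subset of ℝ^d equipped with the ℓ_∞ metric, and let r > 0. Then the number of subsets S ⊆ X that are maximal (under inclusion) among subsets of X whose points pairwise satisfy dist(x, y) ≤ 2r is at most |X|^d. (Equivalently, the r-neighborhood graph G(X)_r in the ℓ_∞ metric has at most |X|^d maximal cliques.) -/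
/-- For a finite set `X ⊆ ℝ^d` with the `ℓ_∞` metric (the sup metric, which is the
default product metric on `Fin d → ℝ`) and `r > 0`, the `r`-neighborhood graph of `X`
has at most `|X|^d` maximal cliques. -/
theorem stmt_7 (d : ℕ) (hd : 1 ≤ d) (X : Finset (Fin d → ℝ)) (r : ℝ) (hr : 0 < r) :
    Set.ncard {S : Finset (Fin d → ℝ) | S.Nonempty ∧ S ⊆ X ∧
        (∀ x ∈ S, ∀ y ∈ S, dist x y ≤ 2 * r) ∧
        ∀ T : Finset (Fin d → ℝ), T ⊆ X →
          (∀ x ∈ T, ∀ y ∈ T, dist x y ≤ 2 * r) → S ⊆ T → S = T} ≤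
      X.card ^ d := by
  classical
  set f : Finset (Fin d → ℝ) → (Fin d → ℝ) := fun S i =>
    if h : (S.image (fun x => x i)).Nonempty then (S.image (fun x => x i)).min' h else 0
    with hfdef
  set 𝒮 : Set (Finset (Fin d → ℝ)) := {S : Finset (Fin d → ℝ) | S.Nonempty ∧ S ⊆ X ∧
        (∀ x ∈ S, ∀ y ∈ S, dist x y ≤ 2 * r) ∧
        ∀ T : Finset (Fin d → ℝ), T ⊆ X →
          (∀ x ∈ T, ∀ y ∈ T, dist x y ≤ 2 * r) → S ⊆ T → S = T} with hSdef
  -- there is a point of S achieving the min in each coordinate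
  have hfi : ∀ S : Finset (Fin d → ℝ), S.Nonempty → ∀ i, ∃ y ∈ S, y i = f S i := by
    intro S hne i
    have h : (S.image (fun x => x i)).Nonempty := hne.image _
    have hm := (S.image (fun x => x i)).min'_mem h
    simp only [Finset.mem_image] at hm
    obtain ⟨y, hy, hyi⟩ := hm
    exact ⟨y, hy, by simp [f, Finset.image_nonempty, hne, hyi]⟩
  -- the key characterization of maximal cliques
  have key : ∀ S ∈ 𝒮,
      S = X.filter (fun x => ∀ i, f S i ≤ x i ∧ x i ≤ f S i + 2 * r) := by
    intro S hS
    obtain ⟨hne, hSX, hclq, hmax⟩ := hS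
    have hle : ∀ x ∈ S, ∀ i, f S i ≤ x i ∧ x i ≤ f S i + 2 * r := by
      intro x hx i
      obtain ⟨y, hy, hyi⟩ := hfi S hne i
      have h : (S.image (fun x => x i)).Nonempty := hne.image _
      constructor
      · have := Finset.min'_le (S.image (fun x => x i)) (x i)
          (Finset.mem_image_of_mem _ hx)
        simpa [f, Finset.image_nonempty, hne] using this
      · have hdist := hclq x hx y hy
        have hd2 : dist (x i) (y i) ≤ 2 * r := by
          have := (dist_pi_le_iff (by linarith)).mp hdist i
          exact this
        rw [Real.dist_eq] at hd2
        have := abs_le.mp hd2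
        have h1 : x i - y i ≤ 2 * r := this.2
        linarith [hyi ▸ h1]
    apply hmax
    · exact Finset.filter_subset _ _
    · intro x hx y hy
      rw [Finset.mem_filter] at hx hy
      rw [dist_pi_le_iff (by linarith)]
      intro i
      rw [Real.dist_eq, abs_le]
      constructor <;> linarith [(hx.2 i).1, (hx.2 i).2, (hy.2 i).1, (hy.2 i).2]
    · intro x hx
      exact Finset.mem_filter.mpr ⟨hSX hx, hle x hx⟩
  -- the min-vector map is injective on 𝒮
  have hinj : Set.InjOn f 𝒮 := by
    intro S hS S' hS' hff
    rw [key S hS, key S' hS', hff]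
  -- the min-vector lies in the product of coordinate images of X
  have hmaps : ∀ S ∈ 𝒮,
      f S ∈ (↑(Fintype.piFinset fun i : Fin d => X.image fun x => x i) :
        Set (Fin d → ℝ)) := by
    intro S hS
    obtain ⟨hne, hSX, -, -⟩ := hS
    simp only [Finset.coe_sort_coe, Finset.mem_coe, Fintype.mem_piFinset]
    intro i
    obtain ⟨y, hy, hyi⟩ := hfi S hne i
    exact hyi ▸ Finset.mem_image_of_mem _ (hSX hy)
  calc 𝒮.ncard
      ≤ (↑(Fintype.piFinset fun i : Fin d => X.image fun x => x i) :
          Set (Fin d → ℝ)).ncard :=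
        Set.ncard_le_ncard_of_injOn f hmaps hinj (Set.toFinite _)
    _ = (Fintype.piFinset fun i : Fin d => X.image fun x => x i).card :=
        Set.ncard_coe_finset _
    _ = ∏ i : Fin d, (X.image fun x => x i).card := Fintype.card_piFinset _
    _ ≤ ∏ _i : Fin d, X.card :=
        Finset.prod_le_prod (fun _ _ => Nat.zero_le _)
          (fun _ _ => Finset.card_image_le)
    _ = X.card ^ d := by simp
end

section
/- Let X be a finite subset of ℝ² equipped with the ℓ_1 metric, and let r > 0. Then the number of subsets S ⊆ X that are maximal (under inclusion) among subsets of X whose points pairwise satisfy dist(x, y) ≤ 2r is at most |X|². (Equivalently, the r-neighborhood graph G(X)_r in the ℓ_1 metric on ℝ² has at most |X|² maximal cliques.) -/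
private lemma abs_add_abs_le_iff (a b c : ℝ) :
    |a| + |b| ≤ c ↔ |a + b| ≤ c ∧ |a - b| ≤ c := by
  constructor
  · intro h
    constructor
    · exact le_trans (abs_add_le a b) h
    · exact le_trans (abs_sub a b) h
  · rintro ⟨h1, h2⟩
    rcases abs_le.mp h1 with ⟨h1a, h1b⟩
    rcases abs_le.mp h2 with ⟨h2a, h2b⟩
    rcases abs_cases a with ⟨ha, _⟩ | ⟨ha, _⟩ <;>
      rcases abs_cases b with ⟨hb, _⟩ | ⟨hb, _⟩ <;> linarith

private lemma l1_dist_eq (x y : PiLp 1 (fun _ : Fin 2 => ℝ)) :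
    dist x y = |x 0 - y 0| + |x 1 - y 1| := by
  rw [PiLp.dist_eq_sum (by norm_num)]
  simp [Fin.sum_univ_two, Real.dist_eq]

private lemma l1_dist_le_iff (x y : PiLp 1 (fun _ : Fin 2 => ℝ)) (c : ℝ) :
    dist x y ≤ c ↔ |(x 0 + x 1) - (y 0 + y 1)| ≤ c ∧ |(x 0 - x 1) - (y 0 - y 1)| ≤ c := by
  rw [l1_dist_eq]
  have := abs_add_abs_le_iff (x 0 - y 0) (x 1 - y 1) c
  constructor
  · intro h
    have h' := this.mp h
    constructor
    · have : x 0 + x 1 - (y 0 + y 1) = (x 0 - y 0) + (x 1 - y 1) := by ring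
      rw [this]; exact h'.1
    · have : x 0 - x 1 - (y 0 - y 1) = (x 0 - y 0) - (x 1 - y 1) := by ring
      rw [this]; exact h'.2
  · rintro ⟨h1, h2⟩
    apply this.mpr
    constructor
    · have : (x 0 - y 0) + (x 1 - y 1) = x 0 + x 1 - (y 0 + y 1) := by ring
      rw [this]; exact h1
    · have : (x 0 - y 0) - (x 1 - y 1) = x 0 - x 1 - (y 0 - y 1) := by ring
      rw [this]; exact h2

/-- For a finite set `X ⊆ ℝ²` with the `ℓ_1` metric and `r > 0`, the `r`-neighborhood
graph of `X` has at most `|X|²` maximal cliques. -/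
theorem stmt_8 (X : Finset (PiLp 1 (fun _ : Fin 2 => ℝ))) (r : ℝ) (hr : 0 < r) :
    Set.ncard {S : Finset (PiLp 1 (fun _ : Fin 2 => ℝ)) | S.Nonempty ∧ S ⊆ X ∧
        (∀ x ∈ S, ∀ y ∈ S, dist x y ≤ 2 * r) ∧
        ∀ T : Finset (PiLp 1 (fun _ : Fin 2 => ℝ)), T ⊆ X →
          (∀ x ∈ T, ∀ y ∈ T, dist x y ≤ 2 * r) → S ⊆ T → S = T} ≤
      X.card ^ 2 := by
  classical
  set u : PiLp 1 (fun _ : Fin 2 => ℝ) → ℝ := fun x => x 0 + x 1 with hu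
  set v : PiLp 1 (fun _ : Fin 2 => ℝ) → ℝ := fun x => x 0 - x 1 with hv
  set M : Set (Finset (PiLp 1 (fun _ : Fin 2 => ℝ))) :=
      {S : Finset (PiLp 1 (fun _ : Fin 2 => ℝ)) | S.Nonempty ∧ S ⊆ X ∧
        (∀ x ∈ S, ∀ y ∈ S, dist x y ≤ 2 * r) ∧
        ∀ T : Finset (PiLp 1 (fun _ : Fin 2 => ℝ)), T ⊆ X →
          (∀ x ∈ T, ∀ y ∈ T, dist x y ≤ 2 * r) → S ⊆ T → S = T} with hM
  -- the key structural lemma: a maximal clique is determined by its u-max and v-max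
  have key : ∀ S ∈ M, ∀ (h : S.Nonempty),
      S = X.filter (fun x => S.sup' h u - 2 * r ≤ u x ∧ u x ≤ S.sup' h u ∧
        S.sup' h v - 2 * r ≤ v x ∧ v x ≤ S.sup' h v) := by
    intro S hS h
    obtain ⟨hne, hSX, hclique, hmax⟩ := hS
    obtain ⟨p, hp, hpu⟩ := Finset.exists_mem_eq_sup' h u
    obtain ⟨q, hq, hqv⟩ := Finset.exists_mem_eq_sup' h v
    have memS : ∀ x ∈ S, S.sup' h u - 2 * r ≤ u x ∧ u x ≤ S.sup' h u ∧
        S.sup' h v - 2 * r ≤ v x ∧ v x ≤ S.sup' h v := by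
      intro x hx
      have hdp := (l1_dist_le_iff x p (2 * r)).mp (hclique x hx p hp)
      have hdq := (l1_dist_le_iff x q (2 * r)).mp (hclique x hx q hq)
      have h1 := abs_le.mp hdp.1
      have h2 := abs_le.mp hdq.2
      refine ⟨?_, Finset.le_sup' u hx, ?_, Finset.le_sup' v hx⟩
      · rw [hpu]; simp only [hu]; linarith [h1.1, h1.2]
      · rw [hqv]; simp only [hv]; linarith [h2.1, h2.2]
    apply Finset.Subset.antisymm
    · intro x hx
      exact Finset.mem_filter.mpr ⟨hSX hx, memS x hx⟩
    · intro x hx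
      rw [Finset.mem_filter] at hx
      obtain ⟨hxX, hx1, hx2, hx3, hx4⟩ := hx
      -- insert x S is a clique
      have hT : ∀ a ∈ insert x S, ∀ b ∈ insert x S, dist a b ≤ 2 * r := by
        have pairwise : ∀ a, (S.sup' h u - 2 * r ≤ u a ∧ u a ≤ S.sup' h u ∧
            S.sup' h v - 2 * r ≤ v a ∧ v a ≤ S.sup' h v) →
            ∀ b, (S.sup' h u - 2 * r ≤ u b ∧ u b ≤ S.sup' h u ∧
            S.sup' h v - 2 * r ≤ v b ∧ v b ≤ S.sup' h v) → dist a b ≤ 2 * r := by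
          rintro a ⟨a1, a2, a3, a4⟩ b ⟨b1, b2, b3, b4⟩
          rw [l1_dist_le_iff]
          constructor
          · rw [abs_le]; simp only [hu] at a1 a2 b1 b2; constructor <;> linarith
          · rw [abs_le]; simp only [hv] at a3 a4 b3 b4; constructor <;> linarith
        intro a ha b hb
        rcases Finset.mem_insert.mp ha with ha | ha
        · rcases Finset.mem_insert.mp hb with hb | hb
          · rw [ha, hb]; simp; positivity
          · rw [ha]; exact pairwise x ⟨hx1, hx2, hx3, hx4⟩ b (memS b hb)
        · rcases Finset.mem_insert.mp hb with hb | hb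
          · rw [hb]; exact pairwise a (memS a ha) x ⟨hx1, hx2, hx3, hx4⟩
          · exact hclique a ha b hb
      have := hmax (insert x S) (Finset.insert_subset hxX hSX) hT
        (Finset.subset_insert x S)
      rw [this]
      exact Finset.mem_insert_self x S
  -- injection into pairs of values
  have hinj : Set.ncard M ≤ Set.ncard (((X.image u) ×ˢ (X.image v) : Finset (ℝ × ℝ)) : Set (ℝ × ℝ)) := by
    apply Set.ncard_le_ncard_of_injOn
      (fun S => if h : S.Nonempty then (S.sup' h u, S.sup' h v) else (0, 0))
    · intro S hS
      obtain ⟨hne, hSX, _, _⟩ := hS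
      simp only [dif_pos hne, Finset.coe_product, Set.mem_prod, Finset.mem_coe,
        Finset.mem_image]
      obtain ⟨p, hp, hpu⟩ := Finset.exists_mem_eq_sup' hne u
      obtain ⟨q, hq, hqv⟩ := Finset.exists_mem_eq_sup' hne v
      exact ⟨⟨p, hSX hp, hpu.symm⟩, ⟨q, hSX hq, hqv.symm⟩⟩
    · intro S hS S' hS' heq
      have hne : S.Nonempty := hS.1
      have hne' : S'.Nonempty := hS'.1
      simp only [dif_pos hne, dif_pos hne', Prod.mk.injEq] at heq
      rw [key S hS hne, key S' hS' hne', heq.1, heq.2]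
  calc Set.ncard M ≤ Set.ncard (((X.image u) ×ˢ (X.image v) : Finset (ℝ × ℝ)) : Set (ℝ × ℝ)) := hinj
    _ = ((X.image u) ×ˢ (X.image v)).card := Set.ncard_coe_finset _
    _ = (X.image u).card * (X.image v).card := Finset.card_product _ _
    _ ≤ X.card * X.card :=
        Nat.mul_le_mul (Finset.card_image_le) (Finset.card_image_le)
    _ = X.card ^ 2 := (sq X.card).symm
end

section
/- Let d ≥ 3, let X be a finite subset of ℝ^d equipped with the ℓ_1 metric, and let r > 0. Then the number of subsets S ⊆ X that are maximal (under inclusion) among subsets of X whose points pairwise satisfy dist(x, y) ≤ 2r is at most |X|^{d·2^{d²−1}}. (Equivalently, the r-neighborhood graph G(X)_r in the ℓ_1 metric has at most |X|^{d·2^{d²−1}} maximal cliques.) -/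
open Finset

private noncomputable def fsgn {d : ℕ} (ε : Fin d → Bool) (x : PiLp 1 (fun _ : Fin d => ℝ)) : ℝ :=
  ∑ i, (if ε i then x i else -(x i))

private lemma dist_l1 {d : ℕ} (x y : PiLp 1 (fun _ : Fin d => ℝ)) :
    dist x y = ∑ i, |x i - y i| := by
  rw [PiLp.dist_eq_sum (by norm_num)]
  simp [Real.dist_eq]

private lemma fsgn_sub_le {d : ℕ} (ε : Fin d → Bool) (x y : PiLp 1 (fun _ : Fin d => ℝ)) :
    fsgn ε x - fsgn ε y ≤ dist x y := by
  rw [dist_l1, fsgn, fsgn, ← Finset.sum_sub_distrib]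
  apply Finset.sum_le_sum
  intro i _
  split_ifs
  · exact le_abs_self _
  · rw [abs_sub_comm]
    calc -x i - -y i = y i - x i := by ring
    _ ≤ |y i - x i| := le_abs_self _

private lemma dist_le_of_fsgn {d : ℕ} (x y : PiLp 1 (fun _ : Fin d => ℝ)) (c : ℝ)
    (h : ∀ ε, fsgn ε x - fsgn ε y ≤ c) : dist x y ≤ c := by
  have := h (fun i => decide (y i ≤ x i))
  rw [fsgn, fsgn, ← Finset.sum_sub_distrib] at this
  rw [dist_l1]
  refine le_trans (le_of_eq ?_) this
  apply Finset.sum_congr rfl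
  intro i _
  by_cases hi : y i ≤ x i
  · simp [hi, abs_of_nonneg (sub_nonneg.mpr hi)]
  · push_neg at hi
    rw [abs_of_neg (by linarith)]
    simp [not_le.mpr hi]
    ring

private lemma fsgn_neg {d : ℕ} (ε : Fin d → Bool) (x y : PiLp 1 (fun _ : Fin d => ℝ)) :
    fsgn ε x - fsgn ε y = fsgn (fun i => !ε i) y - fsgn (fun i => !ε i) x := by
  rw [fsgn, fsgn, fsgn, fsgn, ← Finset.sum_sub_distrib, ← Finset.sum_sub_distrib]
  apply Finset.sum_congr rfl
  intro i _
  cases h : ε i <;> simp [h] <;> ring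

/-- For `d ≥ 3`, a finite set `X ⊆ ℝ^d` with the `ℓ_1` metric, and `r > 0`, the
`r`-neighborhood graph of `X` has at most `|X|^(d·2^(d²−1))` maximal cliques. -/
theorem stmt_9 (d : ℕ) (hd : 3 ≤ d)
    (X : Finset (PiLp 1 (fun _ : Fin d => ℝ))) (r : ℝ) (hr : 0 < r) :
    Set.ncard {S : Finset (PiLp 1 (fun _ : Fin d => ℝ)) | S.Nonempty ∧ S ⊆ X ∧
        (∀ x ∈ S, ∀ y ∈ S, dist x y ≤ 2 * r) ∧
        ∀ T : Finset (PiLp 1 (fun _ : Fin d => ℝ)), T ⊆ X →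
          (∀ x ∈ T, ∀ y ∈ T, dist x y ≤ 2 * r) → S ⊆ T → S = T} ≤
      X.card ^ (d * 2 ^ (d ^ 2 - 1)) := by
  classical
  set M : Set (Finset (PiLp 1 (fun _ : Fin d => ℝ))) :=
    {S : Finset (PiLp 1 (fun _ : Fin d => ℝ)) | S.Nonempty ∧ S ⊆ X ∧
        (∀ x ∈ S, ∀ y ∈ S, dist x y ≤ 2 * r) ∧
        ∀ T : Finset (PiLp 1 (fun _ : Fin d => ℝ)), T ⊆ X →
          (∀ x ∈ T, ∀ y ∈ T, dist x y ≤ 2 * r) → S ⊆ T → S = T} with hM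
  rcases Finset.eq_empty_or_nonempty X with hX | hX
  · have hemp : M = ∅ := by
      ext S
      simp only [hM, Set.mem_setOf_eq, Set.mem_empty_iff_false, iff_false, not_and]
      intro hne hsub
      subst hX
      exact absurd (Finset.subset_empty.mp hsub) (Finset.nonempty_iff_ne_empty.mp hne)
    rw [hemp, Set.ncard_empty]
    exact Nat.zero_le _
  -- argmax selection
  have argmax : ∀ S : M, ∀ ε : Fin d → Bool, ∃ b, b ∈ (S : Finset _) ∧
      ∀ y ∈ (S : Finset _), fsgn ε y ≤ fsgn ε b := by
    rintro ⟨S, hS⟩ ε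
    obtain ⟨b, hb, hbmax⟩ := Finset.exists_max_image S (fsgn ε) hS.1
    exact ⟨b, hb, hbmax⟩
  choose a ha hmax using argmax
  -- key: membership criterion for maximal cliques
  have key : ∀ S : M, ∀ x, x ∈ X →
      (∀ ε, fsgn ε (a S ε) - fsgn ε x ≤ 2 * r) → x ∈ (S : Finset _) := by
    rintro ⟨S, hne, hsub, hcl, hmaxS⟩ x hxX hx
    have main : ∀ v ∈ S, dist x v ≤ 2 * r := by
      intro v hv
      apply dist_le_of_fsgn
      intro ε
      rw [fsgn_neg]
      have h1 := hmax ⟨S, hne, hsub, hcl, hmaxS⟩ (fun i => !ε i) v hv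
      have h2 := hx (fun i => !ε i)
      linarith
    have hT : ∀ u ∈ insert x S, ∀ v ∈ insert x S, dist u v ≤ 2 * r := by
      intro u hu v hv
      rcases Finset.mem_insert.mp hu with hux | hu
      · rcases Finset.mem_insert.mp hv with hvx | hv
        · rw [hux, hvx]; simp; linarith
        · rw [hux]; exact main v hv
      · rcases Finset.mem_insert.mp hv with hvx | hv
        · rw [hvx, dist_comm]; exact main u hu
        · exact hcl u hu v hv
    have heq := hmaxS (insert x S) (Finset.insert_subset hxX hsub) hT (Finset.subset_insert _ _)
    show x ∈ S
    rw [heq]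
    exact Finset.mem_insert_self _ _
  -- injectivity of the argmax map
  have hinj : Function.Injective (fun S : M => fun ε => (⟨a S ε, S.2.2.1 (ha S ε)⟩ : X)) := by
    have hsubs : ∀ S T : M, a S = a T → S.1 ⊆ T.1 := by
      intro S T hST x hx
      apply key T x (S.2.2.1 hx)
      intro ε
      rw [← hST]
      exact le_trans (fsgn_sub_le ε _ _) (S.2.2.2.1 _ (ha S ε) x hx)
    intro S₁ S₂ heq
    have haeq : a S₁ = a S₂ := by
      funext ε
      exact congrArg Subtype.val (congrFun heq ε)
    exact Subtype.ext (Finset.Subset.antisymm (hsubs S₁ S₂ haeq) (hsubs S₂ S₁ haeq.symm))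
  -- count
  have hcount : Set.ncard M ≤ X.card ^ (2 ^ d) := by
    rw [← Nat.card_coe_set_eq]
    calc Nat.card M ≤ Nat.card ((Fin d → Bool) → X) :=
          Nat.card_le_card_of_injective _ hinj
      _ = X.card ^ (2 ^ d) := by
          rw [Nat.card_eq_fintype_card]
          simp [Fintype.card_fun]
  refine le_trans hcount (Nat.pow_le_pow_right (Finset.card_pos.mpr hX) ?_)
  calc 2 ^ d = 1 * 2 ^ d := (one_mul _).symm
    _ ≤ d * 2 ^ (d ^ 2 - 1) := by
        apply Nat.mul_le_mul (by omega)
        apply Nat.pow_le_pow_right (by norm_num)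
        have h2 : d ^ 2 = d * d := sq d
        have h3 : d + 1 ≤ d * d := by nlinarith
        omega
end

section
/- Let X be a nonempty finite metric space and let k ≥ 0 be an integer. Then the number of nonempty collections T of subsets of X such that |T| ≤ k + 1 and, for some common r ≥ 0, every member of T is an r-maximal intrinsic Čech simplex of X, is at most |X|^{k+2}. -/
/-- Decode a tuple of `k+2` points into a collection of closed balls: the last point
together with the first determines the radius, the first `k+1` points are centers. -/
def cechDecode {X : Type*} [MetricSpace X] (k : ℕ) (f : Fin (k + 2) → X) : Set (Set X) :=
  Set.range fun i : Fin (k + 1) =>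
    Metric.closedBall (f i.castSucc) (dist (f 0) (f (Fin.last (k + 1))))

/-- A finite nonempty set of cardinality at most `n` is the range of a function on `Fin n`. -/
lemma exists_range_eq_of_ncard_le {α : Type*} {s : Set α} {n : ℕ} (hs : s.Finite)
    (hne : s.Nonempty) (hcard : s.ncard ≤ n) : ∃ f : Fin n → α, Set.range f = s := by
  obtain ⟨a, ha⟩ := hne
  set t := hs.toFinset with ht
  have htc : t.card = s.ncard := by rw [Set.ncard_eq_toFinset_card _ hs]
  let e : Fin t.card ≃ t := (Fintype.equivFinOfCardEq (Fintype.card_coe t)).symm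
  refine ⟨fun i => if h : (i : ℕ) < t.card then (e ⟨i, h⟩ : α) else a, ?_⟩
  ext x
  constructor
  · rintro ⟨i, rfl⟩
    dsimp only
    split_ifs with h
    · exact hs.mem_toFinset.1 (e ⟨(i : ℕ), h⟩).2
    · exact ha
  · intro hx
    have hx' : x ∈ t := hs.mem_toFinset.2 hx
    set j := e.symm ⟨x, hx'⟩ with hj
    have hjn : (j : ℕ) < n := lt_of_lt_of_le j.2 (htc ▸ hcard)
    refine ⟨⟨(j : ℕ), hjn⟩, ?_⟩
    have hjc : (j : ℕ) < t.card := j.2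
    simp only [dif_pos hjc]
    have : (⟨(j : ℕ), hjc⟩ : Fin t.card) = j := rfl
    rw [this, hj, Equiv.apply_symm_apply]

/-- For a nonempty finite metric space `X` and `k ≥ 0`, the number of nonempty
collections `T` of subsets of `X` with `|T| ≤ k + 1` such that, for some common
`r ≥ 0`, every member of `T` is an `r`-maximal intrinsic Čech simplex of `X`,
is at most `|X|^(k+2)`. -/
theorem stmt_11 {X : Type*} [MetricSpace X] [Fintype X] [Nonempty X] (k : ℕ) :
    Set.ncard {T : Set (Set X) | T.Nonempty ∧ T.ncard ≤ k + 1 ∧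
        ∃ r : ℝ, 0 ≤ r ∧ ∀ σ ∈ T,
          σ.Nonempty ∧ (∃ y : X, σ ⊆ Metric.closedBall y r) ∧
          ∀ τ : Set X, τ.Nonempty → (∃ y : X, τ ⊆ Metric.closedBall y r) →
            σ ⊆ τ → σ = τ} ≤
      Fintype.card X ^ (k + 2) := by
  classical
  have hsub : {T : Set (Set X) | T.Nonempty ∧ T.ncard ≤ k + 1 ∧
        ∃ r : ℝ, 0 ≤ r ∧ ∀ σ ∈ T,
          σ.Nonempty ∧ (∃ y : X, σ ⊆ Metric.closedBall y r) ∧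
          ∀ τ : Set X, τ.Nonempty → (∃ y : X, τ ⊆ Metric.closedBall y r) →
            σ ⊆ τ → σ = τ} ⊆ Set.range (cechDecode k) := by
    rintro T ⟨hne, hcard, r, hr0, hmax⟩
    -- every maximal simplex is a closed ball of radius r
    have hball : ∀ σ ∈ T, ∃ y : X, σ = Metric.closedBall y r := by
      intro σ hσ
      obtain ⟨hσne, ⟨y, hy⟩, hm⟩ := hmax σ hσ
      exact ⟨y, hm _ ⟨y, Metric.mem_closedBall_self hr0⟩ ⟨y, subset_rfl⟩ hy⟩
    choose! c hc using hball
    -- enumerate T by Fin (k+1)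
    obtain ⟨g, hg⟩ := exists_range_eq_of_ncard_le T.toFinite hne hcard
    have hgT : ∀ i, g i ∈ T := fun i => hg ▸ Set.mem_range_self i
    -- pick a pair (index, point) maximizing the distance to the center
    obtain ⟨x0, hx0⟩ := (hmax (g 0) (hgT 0)).1
    obtain ⟨p₀, hp₀, hmaxp⟩ := Set.exists_max_image {p : Fin (k + 1) × X | p.2 ∈ g p.1}
      (fun p => dist (c (g p.1)) p.2) (Set.toFinite _) ⟨(0, x0), hx0⟩
    set π := Equiv.swap (0 : Fin (k + 1)) p₀.1 with hπ
    have hg' : Set.range (g ∘ π) = T := by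
      rw [Function.Surjective.range_comp π.surjective, hg]
    set r' := dist (c (g p₀.1)) p₀.2 with hr'
    have hr'r : r' ≤ r := by
      have h1 : g p₀.1 = Metric.closedBall (c (g p₀.1)) r := hc _ (hgT p₀.1)
      have h2 : p₀.2 ∈ Metric.closedBall (c (g p₀.1)) r := h1 ▸ hp₀
      rw [hr', dist_comm]
      exact Metric.mem_closedBall.1 h2
    have key : ∀ i : Fin (k + 1),
        Metric.closedBall (c ((g ∘ π) i)) r' = (g ∘ π) i := by
      intro i
      have hi : (g ∘ π) i ∈ T := hg' ▸ Set.mem_range_self i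
      have hceq : (g ∘ π) i = Metric.closedBall (c ((g ∘ π) i)) r := hc _ hi
      apply Set.Subset.antisymm
      · intro x hx
        rw [hceq]
        exact Metric.closedBall_subset_closedBall hr'r hx
      · intro x hx
        have hxA : ((π i, x) : Fin (k + 1) × X) ∈
            {p : Fin (k + 1) × X | p.2 ∈ g p.1} := hx
        have := hmaxp _ hxA
        rw [Metric.mem_closedBall, dist_comm]
        exact this
    -- the encoding function
    refine ⟨Fin.snoc (fun i => c ((g ∘ π) i)) p₀.2, ?_⟩
    have hf0 : (Fin.snoc (fun i => c ((g ∘ π) i)) p₀.2 : Fin (k + 2) → X) 0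
        = c (g p₀.1) := by
      have h0 : (0 : Fin (k + 2)) = Fin.castSucc (0 : Fin (k + 1)) := by simp
      rw [h0, Fin.snoc_castSucc]
      simp [hπ, Equiv.swap_apply_left]
    have hfl : (Fin.snoc (fun i => c ((g ∘ π) i)) p₀.2 : Fin (k + 2) → X)
        (Fin.last (k + 1)) = p₀.2 := Fin.snoc_last _ _
    unfold cechDecode
    rw [hf0, hfl, ← hr']
    have : (fun i : Fin (k + 1) =>
        Metric.closedBall ((Fin.snoc (fun i => c ((g ∘ π) i)) p₀.2 :
          Fin (k + 2) → X) i.castSucc) r') = g ∘ π := by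
      funext i
      rw [Fin.snoc_castSucc]
      exact key i
    rw [this, hg']
  calc Set.ncard {T : Set (Set X) | T.Nonempty ∧ T.ncard ≤ k + 1 ∧
        ∃ r : ℝ, 0 ≤ r ∧ ∀ σ ∈ T,
          σ.Nonempty ∧ (∃ y : X, σ ⊆ Metric.closedBall y r) ∧
          ∀ τ : Set X, τ.Nonempty → (∃ y : X, τ ⊆ Metric.closedBall y r) →
            σ ⊆ τ → σ = τ}
      ≤ (Set.range (cechDecode k)).ncard := Set.ncard_le_ncard hsub (Set.toFinite _)
    _ = (cechDecode k '' Set.univ).ncard := by rw [Set.image_univ]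
    _ ≤ (Set.univ : Set (Fin (k + 2) → X)).ncard := Set.ncard_image_le Set.finite_univ
    _ = Fintype.card X ^ (k + 2) := by
        rw [Set.ncard_univ, Nat.card_eq_fintype_card]
        simp
end

section
/- Let d ≥ 2 be an integer, let A ⊆ ℝ^d be a closed, convex, nonempty subset of the closed Euclidean unit ball centered at the origin, and let ε ∈ (0, 1). Then there exist an integer N ≤ 2d(1 + 6·ε^{−1/2})^{d−1}, vectors a_1, …, a_N ∈ ℝ^d, and reals b_1, …, b_N such that the intersection of halfspaces P = ⋂_{i=1}^N {y ∈ ℝ^d : ⟨a_i, y⟩ ≤ b_i} satisfies A ⊆ P ⊆ {y ∈ ℝ^d : there exists a ∈ A with ‖y − a‖₂ ≤ ε}, where ‖·‖₂ is the Euclidean norm. -/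
open Metric Set MeasureTheory Module
open scoped InnerProductSpace NNReal ENNReal

/-!
Let `P` be the metric projection onto `A` and `F` a maximal `δ`-separated subset of the sphere of
radius 2, where `δ = (2/3)√ε`; comparing volumes of disjoint balls gives `#F ≤ 2d(1 + 4/δ)^(d-1)`.
Each `f ∈ F` yields the supporting halfspace of `A` at `P f` with outer normal `f - P f`. Suppose
`y` lies in all of them, let `x = P y` and let `u` be the unit normal from `x` towards `y`. The ray
from `x` along `u` meets the sphere at a point `δ`-close to some `f ∈ F`. A point `p + c • n` with
`p ∈ A`, `n` a unit outer normal at `p` and `c ≥ 1` projects onto the unit thickening of `A` at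
`p + n`, so nonexpansiveness of projections, applied on the thickening and then on `A`, makes `P f`
and the unit normal of `f` `δ`-close to `x` and `u`. The halfspace of `f` then gives
`‖y - x‖ (1 - δ²/2) ≤ δ²`, so `‖y - x‖ ≤ 4ε/7`.
-/

section Projection

variable {E : Type*} [NormedAddCommGroup E] [InnerProductSpace ℝ E]

/-- The variational form of the metric projection: for closed convex `K`, `IsProjOn K y p` holds
exactly when `p` is the point of `K` nearest to `y`. -/
def IsProjOn (K : Set E) (y p : E) : Prop :=
  p ∈ K ∧ ∀ c ∈ K, ⟪y - p, c - p⟫_ℝ ≤ 0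

theorem exists_isProjOn {K : Set E} (hne : K.Nonempty) (hK : IsComplete K) (hconv : Convex ℝ K)
    (y : E) : ∃ p, IsProjOn K y p := by
  obtain ⟨p, hp, hmin⟩ := exists_norm_eq_iInf_of_complete_convex hne hK hconv y
  exact ⟨p, hp, (norm_eq_iInf_iff_real_inner_le_zero hconv hp).1 hmin⟩

namespace IsProjOn

variable {K : Set E} {y z p q : E}

theorem sq_norm_sub_le_inner (hp : IsProjOn K y p) (hq : IsProjOn K z q) :
    ‖p - q‖ ^ 2 ≤ ⟪y - z, p - q⟫_ℝ := by
  have hpq : 0 ≤ ⟪y - p, p - q⟫_ℝ := by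
    rw [← neg_sub q p, inner_neg_right]
    linarith [hp.2 q hq.1]
  rw [show y - z = (p - q) + (y - p) - (z - q) by abel, inner_sub_left, inner_add_left,
    real_inner_self_eq_norm_sq]
  linarith [hq.2 p hp.1]

theorem norm_sub_le (hp : IsProjOn K y p) (hq : IsProjOn K z q) : ‖p - q‖ ≤ ‖y - z‖ := by
  have h := (hp.sq_norm_sub_le_inner hq).trans (real_inner_le_norm _ _)
  nlinarith [norm_nonneg (p - q), norm_nonneg (y - z)]

theorem norm_sub_sub_le (hp : IsProjOn K y p) (hq : IsProjOn K z q) :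
    ‖(y - p) - (z - q)‖ ≤ ‖y - z‖ := by
  have h := hp.sq_norm_sub_le_inner hq
  have hexp : ‖(y - p) - (z - q)‖ ^ 2 = ‖y - z‖ ^ 2 - 2 * ⟪y - z, p - q⟫_ℝ + ‖p - q‖ ^ 2 := by
    rw [show (y - p) - (z - q) = (y - z) - (p - q) by abel, norm_sub_sq_real]
  rw [← pow_le_pow_iff_left₀ (norm_nonneg _) (norm_nonneg _) two_ne_zero]
  linarith [sq_nonneg ‖p - q‖]

theorem add_smul_sub (hp : IsProjOn K y p) {c : ℝ} (hc : 0 ≤ c) :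
    IsProjOn K (p + c • (y - p)) p :=
  ⟨hp.1, fun a ha => by
    rw [add_sub_cancel_left, real_inner_smul_left]
    exact mul_nonpos_of_nonneg_of_nonpos hc (hp.2 a ha)⟩

theorem biUnion_closedBall {u : E} (hp : IsProjOn K (p + u) p) {c : ℝ} (hc : 1 ≤ c) :
    IsProjOn (⋃ a ∈ K, closedBall a ‖u‖) (p + c • u) (p + u) := by
  refine ⟨mem_iUnion₂.2 ⟨p, hp.1, by simp [dist_eq_norm]⟩, fun b hb => ?_⟩
  obtain ⟨a, ha, hba⟩ := mem_iUnion₂.1 hb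
  rw [mem_closedBall, dist_eq_norm] at hba
  have hua : ⟪u, a - p⟫_ℝ ≤ 0 := by simpa using hp.2 a ha
  have hub : ⟪u, b - a⟫_ℝ ≤ ‖u‖ * ‖u‖ :=
    (real_inner_le_norm _ _).trans (mul_le_mul_of_nonneg_left hba (norm_nonneg u))
  have hsplit : ⟪u, b - (p + u)⟫_ℝ = ⟪u, b - a⟫_ℝ + ⟪u, a - p⟫_ℝ - ‖u‖ * ‖u‖ := by
    rw [← real_inner_self_eq_norm_mul_norm, ← inner_add_right, ← inner_sub_right]
    congr 1; abel
  rw [show p + c • u - (p + u) = (c - 1) • u by module, real_inner_smul_left]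
  exact mul_nonpos_of_nonneg_of_nonpos (by linarith) (by linarith)

theorem norm_sub_le_of_add_smul {x x' u u' : E} {c c' δ : ℝ} (h : IsProjOn K (x + u) x)
    (h' : IsProjOn K (x' + u') x') (hu : ‖u'‖ = ‖u‖) (hc : 1 ≤ c) (hc' : 1 ≤ c')
    (hδ : ‖(x + c • u) - (x' + c' • u')‖ ≤ δ) : ‖x - x'‖ ≤ δ ∧ ‖u - u'‖ ≤ δ := by
  have hC : ‖(x + u) - (x' + u')‖ ≤ δ :=
    ((h.biUnion_closedBall hc).norm_sub_le (hu ▸ h'.biUnion_closedBall hc')).trans hδ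
  exact ⟨(h.norm_sub_le h').trans hC, by simpa using (h.norm_sub_sub_le h').trans hC⟩

end IsProjOn

end Projection

theorem exists_nonneg_norm_add_smul_eq {V : Type*} [NormedAddCommGroup V] [NormedSpace ℝ V]
    {w u : V} {R : ℝ} (hw : ‖w‖ ≤ R) (hu : ‖u‖ = 1) : ∃ s : ℝ, 0 ≤ s ∧ ‖w + s • u‖ = R := by
  have hcont : ContinuousOn (fun s : ℝ => ‖w + s • u‖) (Icc 0 (R + ‖w‖)) := by fun_prop
  have hR : R ≤ ‖w + (R + ‖w‖) • u‖ := by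
    have := norm_sub_norm_le ((R + ‖w‖) • u) (-w)
    rw [norm_smul, hu, norm_neg, sub_neg_eq_add, add_comm ((R + ‖w‖) • u),
      Real.norm_of_nonneg (by linarith [norm_nonneg w])] at this
    linarith
  obtain ⟨s, hs, hsR⟩ := intermediate_value_Icc (by linarith [norm_nonneg w]) hcont
    ⟨by simpa using hw, hR⟩
  exact ⟨s, hs.1, hsR⟩

section Dudley

variable {E : Type*} [NormedAddCommGroup E] [InnerProductSpace ℝ E] {K : Set E} {P : E → E}
  {F : Set E} {δ : ℝ≥0}

theorem exists_mem_isCover_norm_sub_le (hK : K ⊆ closedBall 0 1)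
    (hP : ∀ y, IsProjOn K y (P y)) (hFS : F ⊆ sphere 0 2) (hF : IsCover δ (sphere 0 2) F) {x u : E}
    (hxu : IsProjOn K (x + u) x) (hu : ‖u‖ = 1) :
    ∃ f ∈ F, ‖x - P f‖ ≤ δ ∧ ‖u - ‖f - P f‖⁻¹ • (f - P f)‖ ≤ δ := by
  have hK1 : ∀ y, ‖P y‖ ≤ 1 := fun y => mem_closedBall_zero_iff.1 (hK (hP y).1)
  obtain ⟨s, hs, hsv⟩ := exists_nonneg_norm_add_smul_eq (w := x + u) (R := 2)
    ((norm_add_le _ _).trans (by linarith [mem_closedBall_zero_iff.1 (hK hxu.1)])) hu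
  obtain ⟨f, hfF, hfv⟩ : ∃ f ∈ F, ‖(x + (1 + s) • u) - f‖ ≤ δ := by
    have := isCover_iff_subset_iUnion_closedBall.1 hF (mem_sphere_zero_iff_norm.2 hsv)
    simp only [mem_iUnion₂, mem_closedBall, dist_eq_norm] at this
    simpa [add_smul, add_assoc] using this
  set D := ‖f - P f‖
  have hD : 1 ≤ D := by
    have := norm_sub_norm_le f (P f)
    rw [mem_sphere_zero_iff_norm.1 (hFS hfF)] at this
    linarith [hK1 f]
  set n := D⁻¹ • (f - P f)
  have hn : ‖n‖ = 1 := norm_smul_inv_norm (norm_pos_iff.1 (by linarith))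
  have hfn : f = P f + D • n := by
    simp only [n, smul_smul, mul_inv_cancel₀ (by linarith : D ≠ 0), one_smul, add_sub_cancel]
  have hxn : IsProjOn K (P f + n) (P f) := (hP f).add_smul_sub (inv_nonneg.2 (by linarith))
  exact ⟨f, hfF, hxu.norm_sub_le_of_add_smul (c := 1 + s) hxn (hn.trans hu.symm)
    (by linarith) hD (hfn ▸ hfv)⟩

theorem norm_sub_mul_le_of_isCover_sphere (hK : K ⊆ closedBall 0 1)
    (hP : ∀ y, IsProjOn K y (P y)) (hFS : F ⊆ sphere 0 2) (hF : IsCover δ (sphere 0 2) F)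
    {y : E} (hy : ∀ f ∈ F, ⟪f - P f, y - P f⟫_ℝ ≤ 0) : ‖y - P y‖ * (1 - δ ^ 2 / 2) ≤ δ ^ 2 := by
  set x := P y
  rcases (norm_nonneg (y - x)).eq_or_lt with ht | ht
  · rw [← ht, zero_mul]; positivity
  set t := ‖y - x‖
  set u := t⁻¹ • (y - x)
  have hu : ‖u‖ = 1 := norm_smul_inv_norm (norm_pos_iff.1 ht)
  have hyx : y - x = t • u := by simp only [u, smul_smul, mul_inv_cancel₀ ht.ne', one_smul]
  have hxu : IsProjOn K (x + u) x := (hP y).add_smul_sub (inv_nonneg.2 ht.le)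
  obtain ⟨f, hfF, hxx, hun⟩ := exists_mem_isCover_norm_sub_le hK hP hFS hF hxu hu
  set x' := P f
  set n := ‖f - x'‖⁻¹ • (f - x')
  have hn : ‖n‖ = 1 := norm_smul_inv_norm <| norm_pos_iff.1 <| by
    linarith [norm_sub_norm_le f x', mem_sphere_zero_iff_norm.1 (hFS hfF),
      mem_closedBall_zero_iff.1 (hK (hP f).1)]
  have hny : ⟪n, y - x'⟫_ℝ ≤ 0 := by
    rw [real_inner_smul_left]
    exact mul_nonpos_of_nonneg_of_nonpos (by positivity) (hy f hfF)
  have hnu : 1 - δ ^ 2 / 2 ≤ ⟪n, u⟫_ℝ := by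
    have := norm_sub_sq_real u n
    rw [hu, hn, real_inner_comm] at this
    nlinarith [norm_nonneg (u - n)]
  have hux : ⟪u, x' - x⟫_ℝ ≤ 0 := by simpa using hxu.2 x' (hP f).1
  rw [norm_sub_rev] at hun hxx
  calc t * (1 - δ ^ 2 / 2) ≤ t * ⟪n, u⟫_ℝ := by gcongr
    _ = ⟪n, y - x'⟫_ℝ + ⟪n - u, x' - x⟫_ℝ + ⟪u, x' - x⟫_ℝ := by
      rw [← real_inner_smul_right, ← hyx, inner_sub_left, inner_sub_right, inner_sub_right,
        inner_sub_right]
      ring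
    _ ≤ 0 + δ * δ + 0 := by
      gcongr
      exact (real_inner_le_norm _ _).trans (mul_le_mul hun hxx (norm_nonneg _) δ.2)
    _ = δ ^ 2 := by ring

end Dudley

theorem exists_finset_isCover_card_le {X : Type*} [PseudoEMetricSpace X] {S : Set X} {δ : ℝ≥0}
    {M : ℕ} (h : ∀ F : Finset X, ↑F ⊆ S → IsSeparated δ (F : Set X) → F.card ≤ M) :
    ∃ F : Finset X, ↑F ⊆ S ∧ F.card ≤ M ∧ IsCover δ S F := by
  have hpack : packingNumber δ S ≠ ⊤ := by
    refine ne_top_of_le_ne_top (ENat.natCast_ne_top M)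
      (iSup₂_le fun C hCS => iSup_le fun hC => ?_)
    by_contra! hlt
    obtain ⟨C', hC'C, hC'⟩ := exists_subset_encard_eq (Order.add_one_le_of_lt hlt)
    have hfin : C'.Finite := finite_of_encard_eq_coe hC'
    have := h hfin.toFinset (by simpa using hC'C.trans hCS) (by simpa using hC.subset hC'C)
    rw [← Nat.cast_le (α := ℕ∞), ← encard_coe_eq_coe_finsetCard, Finite.coe_toFinset,
      hC'] at this
    exact (ENat.lt_add_one_iff (ENat.natCast_ne_top M)).2 le_rfl |>.not_ge this
  have hfin : (maximalSeparatedSet δ S).Finite :=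
    encard_ne_top_iff.1 (encard_maximalSeparatedSet hpack ▸ hpack)
  have hsub : ↑hfin.toFinset ⊆ S := by simpa using maximalSeparatedSet_subset
  exact ⟨hfin.toFinset, hsub, h _ hsub (by simpa using isSeparated_maximalSeparatedSet),
    by simpa using isCover_maximalSeparatedSet hpack⟩

section Packing

variable {E : Type*} [NormedAddCommGroup E] [NormedSpace ℝ E] [FiniteDimensional ℝ E]

theorem card_mul_pow_add_pow_le_of_isSeparated_sphere {R : ℝ} {δ : ℝ≥0} (hδ : 0 < δ)
    (hδR : δ ≤ 2 * R) {F : Finset E} (hFS : ↑F ⊆ sphere (0 : E) R)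
    (hF : IsSeparated δ (F : Set E)) :
    F.card * (δ / 2 : ℝ) ^ finrank ℝ E + (R - δ / 2) ^ finrank ℝ E ≤
      (R + δ / 2) ^ finrank ℝ E := by
  borelize E
  set μ : Measure E := Measure.addHaar
  have hnorm : ∀ p ∈ F, ‖p‖ = R := fun p hp => mem_sphere_zero_iff_norm.1 (hFS hp)
  have hball (p : E) :
      μ.real (ball p (δ / 2)) = (δ / 2 : ℝ) ^ finrank ℝ E * μ.real (ball 0 1) := by
    simp [Measure.real, Measure.addHaar_ball_of_pos μ p (by positivity : (0 : ℝ) < δ / 2),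
      ENNReal.toReal_ofReal (by positivity : (0 : ℝ) ≤ (δ / 2) ^ finrank ℝ E)]
  have hdisj : (F : Set E).PairwiseDisjoint (ball · (δ / 2)) := fun p hp q hq hpq => by
    have hpq : (δ : ℝ≥0∞) < edist p q := hF hp hq hpq
    rw [edist_nndist, ENNReal.coe_lt_coe, ← NNReal.coe_lt_coe, coe_nndist] at hpq
    exact ball_disjoint_ball (by linarith)
  have hinner : Disjoint (⋃ p ∈ F, ball p (δ / 2)) (closedBall 0 (R - δ / 2)) := by
    simp only [disjoint_iUnion_left]
    intro p hp
    refine disjoint_left.2 fun z hz hz' => ?_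
    rw [mem_ball, dist_eq_norm] at hz
    rw [mem_closedBall_zero_iff] at hz'
    linarith [norm_sub_norm_le p z, norm_sub_rev p z, hnorm p hp]
  have hsub : (⋃ p ∈ F, ball p (δ / 2)) ∪ closedBall 0 (R - δ / 2) ⊆
      closedBall 0 (R + δ / 2) := by
    refine union_subset (iUnion₂_subset fun p hp => ?_)
      (closedBall_subset_closedBall (by linarith))
    refine ball_subset_closedBall.trans (closedBall_subset_closedBall' ?_)
    rw [dist_zero_right, hnorm p hp, add_comm]
  have hvol := measureReal_mono (μ := μ) hsub measure_closedBall_lt_top.ne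
  rw [measureReal_union hinner measurableSet_closedBall
      ((measure_mono (subset_union_left.trans hsub)).trans_lt measure_closedBall_lt_top).ne
      measure_closedBall_lt_top.ne,
    measureReal_biUnion_finset hdisj (fun _ _ => measurableSet_ball)
      (fun _ _ => measure_ball_lt_top.ne),
    Finset.sum_congr rfl (fun p _ => hball p), Finset.sum_const, nsmul_eq_mul,
    Measure.addHaar_real_closedBall μ _ (by linarith),
    Measure.addHaar_real_closedBall μ _ (by linarith [δ.2]), ← mul_assoc, ← add_mul] at hvol
  have hpos : 0 < μ.real (ball 0 1) :=
    ENNReal.toReal_pos (measure_ball_pos μ 0 one_pos).ne' measure_ball_lt_top.ne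
  exact le_of_mul_le_mul_right hvol hpos

theorem card_le_of_isSeparated_sphere {R : ℝ} {δ : ℝ≥0} (hδ : 0 < δ) (hδR : δ ≤ 2 * R)
    {F : Finset E} (hFS : ↑F ⊆ sphere (0 : E) R) (hF : IsSeparated δ (F : Set E)) :
    (F.card : ℝ) ≤ 2 * finrank ℝ E * (1 + 2 * R / δ) ^ (finrank ℝ E - 1) := by
  set d := finrank ℝ E
  set t := 2 * R / δ
  have hδ' : (0 : ℝ) < δ := hδ
  have ht : 1 ≤ t := by rw [le_div_iff₀ hδ']; linarith
  have htδ : δ * t = 2 * R := mul_div_cancel₀ _ hδ'.ne'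
  have hvol := card_mul_pow_add_pow_le_of_isSeparated_sphere hδ hδR hFS hF
  rw [show R - δ / 2 = δ / 2 * (t - 1) by linear_combination -htδ / 2,
    show R + δ / 2 = δ / 2 * (t + 1) by linear_combination -htδ / 2, mul_pow, mul_pow] at hvol
  have hcard : (F.card : ℝ) ≤ (t + 1) ^ d - (t - 1) ^ d := by
    have : (0 : ℝ) < (δ / 2) ^ d := by positivity
    nlinarith
  calc (F.card : ℝ) ≤ |(t + 1) ^ d - (t - 1) ^ d| := hcard.trans (le_abs_self _)
    _ ≤ |(t + 1) - (t - 1)| * d * max |t + 1| |t - 1| ^ (d - 1) := abs_pow_sub_pow_le ..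
    _ = 2 * d * (1 + t) ^ (d - 1) := by
      rw [show (t + 1) - (t - 1) = 2 by ring, abs_two, abs_of_nonneg (by linarith : 0 ≤ t + 1),
        abs_of_nonneg (by linarith : 0 ≤ t - 1), max_eq_left (by linarith), add_comm 1 t]

theorem exists_finset_isCover_sphere {R : ℝ} {δ : ℝ≥0} (hδ : 0 < δ) (hδR : δ ≤ 2 * R) :
    ∃ F : Finset E, ↑F ⊆ sphere (0 : E) R ∧
      (F.card : ℝ) ≤ 2 * finrank ℝ E * (1 + 2 * R / δ) ^ (finrank ℝ E - 1) ∧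
      IsCover δ (sphere (0 : E) R) F := by
  obtain ⟨F, hFS, hcard, hF⟩ := exists_finset_isCover_card_le (S := sphere (0 : E) R) (δ := δ)
    (M := ⌊2 * finrank ℝ E * (1 + 2 * R / δ) ^ (finrank ℝ E - 1)⌋₊)
    fun F hFS hF => Nat.le_floor (card_le_of_isSeparated_sphere hδ hδR hFS hF)
  have hRδ : 0 ≤ 2 * R / δ := div_nonneg (by linarith [δ.2]) δ.2
  exact ⟨F, hFS, (Nat.floor_le (by positivity)).trans' (by exact_mod_cast hcard), hF⟩

end Packing

theorem stmt_14_general (d : ℕ) (A : Set (EuclideanSpace ℝ (Fin d)))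
    (hclosed : IsClosed A) (hconv : Convex ℝ A) (hne : A.Nonempty)
    (hsub : A ⊆ Metric.closedBall 0 1) (ε : ℝ) (hε0 : 0 < ε) (hε1 : ε < 1) :
    ∃ (N : ℕ) (a : Fin N → EuclideanSpace ℝ (Fin d)) (b : Fin N → ℝ),
      (N : ℝ) ≤ 2 * d * (1 + 6 / Real.sqrt ε) ^ (d - 1) ∧
      (∀ y ∈ A, ∀ i, (inner ℝ (a i) y : ℝ) ≤ b i) ∧
      (∀ y : EuclideanSpace ℝ (Fin d), (∀ i, (inner ℝ (a i) y : ℝ) ≤ b i) →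
        ∃ z ∈ A, ‖y - z‖ ≤ ε) := by
  have hsε1 : √ε < 1 := (Real.sqrt_lt_sqrt hε0.le hε1).trans_eq Real.sqrt_one
  set δ : ℝ≥0 := ⟨2 / 3 * √ε, by positivity⟩
  have hδ : (δ : ℝ) = 2 / 3 * √ε := rfl
  obtain ⟨F, hFS, hFcard, hFcover⟩ := exists_finset_isCover_sphere
    (E := EuclideanSpace ℝ (Fin d)) (R := 2) (NNReal.coe_pos.1 (by rw [hδ]; positivity))
    (by rw [hδ]; linarith)
  rw [finrank_euclideanSpace_fin, hδ,
    show 2 * 2 / (2 / 3 * √ε) = 6 / √ε by field_simp; ring] at hFcard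
  choose P hP using exists_isProjOn hne hclosed.isComplete hconv
  let f (i : Fin F.card) : EuclideanSpace ℝ (Fin d) := F.equivFin.symm i
  refine ⟨F.card, fun i => f i - P (f i), fun i => ⟪f i - P (f i), P (f i)⟫_ℝ, hFcard,
    fun y hy i => ?_, fun y hy => ⟨P y, (hP y).1, ?_⟩⟩
  · have := (hP (f i)).2 y hy
    rw [inner_sub_right] at this
    linarith
  · have key := norm_sub_mul_le_of_isCover_sphere hsub hP hFS hFcover fun g hg => by
      simpa [inner_sub_right, f] using hy (F.equivFin ⟨g, hg⟩)
    rw [hδ, mul_pow, Real.sq_sqrt hε0.le] at key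
    nlinarith [norm_nonneg (y - P y)]

/-- Dudley's theorem: for `d ≥ 2`, a closed convex nonempty subset `A` of the closed
Euclidean unit ball in `ℝ^d`, and `ε ∈ (0,1)`, there is an intersection `P` of at most
`2d(1 + 6·ε^{−1/2})^{d−1}` closed halfspaces with `A ⊆ P ⊆` (the closed `ε`-offset of `A`). -/
theorem stmt_14 (d : ℕ) (hd : 2 ≤ d) (A : Set (EuclideanSpace ℝ (Fin d)))
    (hclosed : IsClosed A) (hconv : Convex ℝ A) (hne : A.Nonempty)
    (hsub : A ⊆ Metric.closedBall 0 1) (ε : ℝ) (hε0 : 0 < ε) (hε1 : ε < 1) :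
    ∃ (N : ℕ) (a : Fin N → EuclideanSpace ℝ (Fin d)) (b : Fin N → ℝ),
      (N : ℝ) ≤ 2 * d * (1 + 6 / Real.sqrt ε) ^ (d - 1) ∧
      (∀ y ∈ A, ∀ i, (inner ℝ (a i) y : ℝ) ≤ b i) ∧
      (∀ y : EuclideanSpace ℝ (Fin d), (∀ i, (inner ℝ (a i) y : ℝ) ≤ b i) →
        ∃ z ∈ A, ‖y - z‖ ≤ ε) :=
  stmt_14_general d A hclosed hconv hne hsub ε hε0 hε1
end

section
/- Let d ≥ 2 be an integer, let p ∈ [1, ∞], let X be a finite subset of ℝ^d equipped with the ℓ_p metric, and let ε ∈ (0, 1). Set c_d = d·(2·7^{d−1}·d^{(d−1)/4 + 1})^{d+1} and β = c_d·ε^{−(d²−1)/2}. Then there exists a family of simple graphs (H_r)_{r ≥ 0} on vertex set X, monotone in r (i.e., H_r is a subgraph of H_s whenever r ≤ s), such that for every r ≥ 0: (i) G(X)_r is a subgraph of H_r and H_r is a subgraph of G(X)_{(1+ε)r}, where G(X)_r denotes the r-neighborhood graph of X in the ℓ_p metric; and (ii) H_r has at most |X|^β maximal cliques. -/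
/-!
Replace the `ℓ_p` distance by finitely many linear functionals. If `U` is a finite set of
functionals of norm at most `1` such that every `v` satisfies `‖v‖ ≤ (1 + ε) g v` for some
`g ∈ U`, then the graph `H_r` joining `x` and `y` when `|g x - g y| ≤ 2r` for all `g ∈ U` lies
between `G(X)_r` and `G(X)_{(1+ε)r}`. A maximal clique of `H_r` is the set of points lying, for
every `g ∈ U`, in the slab of width `2r` below the maximum of `g` on the clique; so it is
determined by a choice of one maximiser per functional, and there are at most `|X|^|U|` of them.

Such a set `U` with `|U| ≤ 2d (7d/ε)^(d-1)` comes from the integer points on the boundary of the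
cube `[-M, M]^d`, `M = ⌈2d/ε⌉`: rescale a functional norming `v` until its largest coefficient is
`±M`, and round its coefficients. The rounding error has norm at most `d/2`, which is small
against the norm `≥ M` of the rescaled functional.
-/

namespace SimpleGraph

variable {V ι : Type*}

def ofSlabs (f : ι → V → ℝ) (c : ι → ℝ) : SimpleGraph V where
  Adj a b := a ≠ b ∧ ∀ i, |f i a - f i b| ≤ c i
  symm := ⟨fun _ _ h => ⟨h.1.symm, fun i => abs_sub_comm (f i _) _ ▸ h.2 i⟩⟩
  loopless := ⟨fun _ h => h.1 rfl⟩

theorem ofSlabs_mono {f : ι → V → ℝ} {c c' : ι → ℝ} (h : c ≤ c') :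
    ofSlabs f c ≤ ofSlabs f c' :=
  fun _ _ hab => ⟨hab.1, fun i => (hab.2 i).trans (h i)⟩

def slabCell (f : ι → V → ℝ) (c : ι → ℝ) (a : ι → V) : Set V :=
  {y | ∀ i, f i (a i) - c i ≤ f i y ∧ f i y ≤ f i (a i)}

theorem isClique_slabCell (f : ι → V → ℝ) (c : ι → ℝ) (a : ι → V) :
    (ofSlabs f c).IsClique (slabCell f c a) := by
  intro y hy z hz hyz
  refine ⟨hyz, fun i => abs_sub_le_iff.mpr ⟨?_, ?_⟩⟩ <;> linarith [hy i, hz i]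

theorem eq_slabCell_of_maximal {f : ι → V → ℝ} {c : ι → ℝ} (hc : 0 ≤ c) {S : Set V}
    (hS : (ofSlabs f c).IsClique S)
    (hmax : ∀ T, (ofSlabs f c).IsClique T → S ⊆ T → S = T) {a : ι → V} (ha : ∀ i, a i ∈ S)
    (hamax : ∀ i, ∀ y ∈ S, f i y ≤ f i (a i)) : S = slabCell f c a := by
  refine hmax _ (isClique_slabCell f c a) fun y hy i => ⟨?_, hamax i y hy⟩
  obtain rfl | hne := eq_or_ne (a i) y
  · linarith [show 0 ≤ c i from hc i]
  · linarith [abs_sub_le_iff.mp ((hS (ha i) hy hne).2 i)]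

theorem ncard_maximalCliques_ofSlabs_le [Finite V] [Fintype ι] {f : ι → V → ℝ} {c : ι → ℝ}
    (hc : 0 ≤ c) :
    {S : Set V | S.Nonempty ∧ (ofSlabs f c).IsClique S ∧
        ∀ T, (ofSlabs f c).IsClique T → S ⊆ T → S = T}.ncard ≤ Nat.card V ^ Fintype.card ι := by
  have hsub : {S : Set V | S.Nonempty ∧ (ofSlabs f c).IsClique S ∧
      ∀ T, (ofSlabs f c).IsClique T → S ⊆ T → S = T} ⊆ Set.range (slabCell f c) := by
    rintro S ⟨hne, hS, hmax⟩
    choose a ha hamax using fun i => S.exists_max_image (f i) S.toFinite hne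
    exact ⟨a, (eq_slabCell_of_maximal hc hS hmax ha hamax).symm⟩
  calc _ ≤ (Set.range (slabCell f c)).ncard := Set.ncard_le_ncard hsub
    _ ≤ Nat.card (ι → V) := by
      rw [← Set.image_univ]
      exact (Set.ncard_image_le Set.finite_univ).trans (Set.ncard_univ _).le
    _ = Nat.card V ^ Fintype.card ι := by simp [Nat.card_fun]

end SimpleGraph

section NormingSet

variable {E : Type*} [NormedAddCommGroup E] [NormedSpace ℝ E]

def IsNormingSet (U : Finset (StrongDual ℝ E)) (ε : ℝ) : Prop :=
  (∀ g ∈ U, ‖g‖ ≤ 1) ∧ ∀ v : E, v ≠ 0 → ∃ g ∈ U, ‖v‖ ≤ (1 + ε) * g v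

theorem norm_le_mul_normalize_apply {g h : StrongDual ℝ E} {v : E} {δ ε : ℝ} (hε : 0 ≤ ε)
    (hgv : g v = ‖g‖ * ‖v‖) (hg : 0 < ‖g‖) (hhg : ‖h - g‖ ≤ δ)
    (hδ : (2 + ε) * δ ≤ ε * ‖g‖) : ‖v‖ ≤ (1 + ε) * (‖h‖⁻¹ • h) v := by
  have hδ0 : 0 ≤ δ := (norm_nonneg _).trans hhg
  have hupper : ‖h‖ ≤ ‖g‖ + δ := by
    simpa using (norm_add_le (h - g) g).trans (by linarith)
  have hh : 0 < ‖h‖ := by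
    nlinarith [norm_sub_norm_le g h, norm_sub_rev g h]
  have happly : (‖g‖ - δ) * ‖v‖ ≤ h v := by
    have := neg_abs_le ((h - g) v)
    have := ((h - g).le_opNorm v).trans (mul_le_mul_of_nonneg_right hhg (norm_nonneg v))
    rw [sub_apply, Real.norm_eq_abs] at *
    linarith
  have key : ‖h‖ * ‖v‖ ≤ (1 + ε) * h v := calc
    ‖h‖ * ‖v‖ ≤ (‖g‖ + δ) * ‖v‖ := by gcongr
    _ ≤ (1 + ε) * ((‖g‖ - δ) * ‖v‖) := by nlinarith [norm_nonneg v]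
    _ ≤ (1 + ε) * h v := by gcongr
  calc ‖v‖ = ‖h‖⁻¹ * (‖h‖ * ‖v‖) := by field_simp
    _ ≤ ‖h‖⁻¹ * ((1 + ε) * h v) := by gcongr
    _ = (1 + ε) * (‖h‖⁻¹ • h) v := by
      rw [smul_apply, smul_eq_mul]; ring

def normingGraph (U : Finset (StrongDual ℝ E)) (X : Finset E) (r : ℝ) : SimpleGraph X :=
  SimpleGraph.ofSlabs (fun (g : U) (x : X) => g.1 x.1) fun _ => 2 * r

variable (U : Finset (StrongDual ℝ E)) (X : Finset E)

theorem normingGraph_mono {r s : ℝ} (h : r ≤ s) : normingGraph U X r ≤ normingGraph U X s :=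
  SimpleGraph.ofSlabs_mono fun _ => by linarith

theorem normingGraph_adj_of_dist_le (hU : ∀ g ∈ U, ‖g‖ ≤ 1) {r : ℝ} {x y : X} (hxy : x ≠ y)
    (h : dist x.1 y.1 ≤ 2 * r) : (normingGraph U X r).Adj x y := by
  refine ⟨hxy, fun g => ?_⟩
  show |g.1 x.1 - g.1 y.1| ≤ 2 * r
  rw [← map_sub, ← Real.norm_eq_abs]
  calc ‖g.1 (x.1 - y.1)‖ ≤ ‖g.1‖ * ‖x.1 - y.1‖ := g.1.le_opNorm _
    _ ≤ 1 * ‖x.1 - y.1‖ := by gcongr; exact hU g.1 g.2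
    _ ≤ 2 * r := by rwa [one_mul, ← dist_eq_norm]

theorem dist_le_of_normingGraph_adj {ε r : ℝ} (hU : IsNormingSet U ε) (hε : 0 ≤ ε) {x y : X}
    (h : (normingGraph U X r).Adj x y) : dist x.1 y.1 ≤ 2 * ((1 + ε) * r) := by
  obtain ⟨g, hg, hgv⟩ := hU.2 (x.1 - y.1) (sub_ne_zero.mpr (Subtype.coe_injective.ne h.1))
  have hslab : |g (x.1 - y.1)| ≤ 2 * r := by rw [map_sub]; exact h.2 ⟨g, hg⟩
  rw [dist_eq_norm]
  calc ‖x.1 - y.1‖ ≤ (1 + ε) * g (x.1 - y.1) := hgv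
    _ ≤ (1 + ε) * (2 * r) := by gcongr; exact (le_abs_self _).trans hslab
    _ = 2 * ((1 + ε) * r) := by ring

theorem ncard_maximalCliques_normingGraph_le {r : ℝ} (hr : 0 ≤ r) :
    {S : Set X | S.Nonempty ∧ (normingGraph U X r).IsClique S ∧
        ∀ T, (normingGraph U X r).IsClique T → S ⊆ T → S = T}.ncard ≤ X.card ^ U.card := by
  simpa only [normingGraph, Nat.card_eq_fintype_card, Fintype.card_coe] using
    SimpleGraph.ncard_maximalCliques_ofSlabs_le (f := fun (g : U) (x : X) => g.1 x.1)
    (fun _ => by positivity : (0 : U → ℝ) ≤ fun _ => 2 * r)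

end NormingSet

theorem abs_round_le {x : ℝ} {M : ℤ} (h : |x| ≤ M) : |round x| ≤ M := by
  have hmono : Monotone (round : ℝ → ℤ) := fun a b hab => by
    simp only [round_eq]
    exact Int.floor_mono (by linarith)
  rw [abs_le] at h ⊢
  constructor
  · have := hmono h.1
    rwa [← Int.cast_neg, round_intCast] at this
  · have := hmono h.2
    rwa [round_intCast] at this

section CubeBoundary

variable (ι : Type*) [Fintype ι] [DecidableEq ι]

-- The integer points on the boundary of `[-M, M]^ι`, face by face.
noncomputable def cubeBoundary (M : ℕ) : Finset (ι → ℤ) :=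
  Finset.univ.biUnion fun i => ({(M : ℤ), -(M : ℤ)} : Finset ℤ).biUnion fun s =>
    Fintype.piFinset (Function.update (fun _ => Finset.Icc (-(M : ℤ)) M) i {s})

variable {ι}

theorem card_cubeBoundary_le (M : ℕ) :
    (cubeBoundary ι M).card ≤ Fintype.card ι * 2 * (2 * M + 1) ^ (Fintype.card ι - 1) := by
  have hface : ∀ (i : ι) (s : ℤ), (Fintype.piFinset
      (Function.update (fun _ => Finset.Icc (-(M : ℤ)) M) i {s})).card =
        (2 * M + 1) ^ (Fintype.card ι - 1) := by
    intro i s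
    rw [Fintype.card_piFinset]
    simp only [Function.apply_update (fun _ => Finset.card)]
    rw [Finset.prod_update_of_mem (Finset.mem_univ i)]
    simp only [Int.card_Icc, Finset.card_singleton, one_mul, Finset.prod_const,
      Finset.card_sdiff, Finset.card_univ]
    congr 1
    · omega
    · simp
  calc (cubeBoundary ι M).card
      ≤ ∑ i : ι, ∑ s ∈ ({(M : ℤ), -(M : ℤ)} : Finset ℤ), (Fintype.piFinset
          (Function.update (fun _ => Finset.Icc (-(M : ℤ)) M) i {s})).card :=
        Finset.card_biUnion_le.trans (Finset.sum_le_sum fun _ _ => Finset.card_biUnion_le)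
    _ ≤ ∑ _i : ι, 2 * (2 * M + 1) ^ (Fintype.card ι - 1) := by
        refine Finset.sum_le_sum fun i _ => ?_
        simp only [hface, Finset.sum_const, smul_eq_mul]
        exact Nat.mul_le_mul_right _ Finset.card_le_two
    _ = Fintype.card ι * 2 * (2 * M + 1) ^ (Fintype.card ι - 1) := by
        simp [Finset.card_univ, mul_assoc]

theorem mem_cubeBoundary {M : ℕ} {z : ι → ℤ} (hz : ∀ j, |z j| ≤ M) (i : ι) (hi : |z i| = M) :
    z ∈ cubeBoundary ι M := by
  simp only [cubeBoundary, Finset.mem_biUnion, Finset.mem_univ, true_and, Finset.mem_insert,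
    Finset.mem_singleton, Fintype.mem_piFinset]
  refine ⟨i, z i, ?_, fun j => ?_⟩
  · rcases abs_eq (Int.natCast_nonneg M) |>.mp hi with h | h <;> simp [h]
  · rcases eq_or_ne j i with rfl | hj
    · simp
    · simpa [Function.update_of_ne hj, ← abs_le] using hz j

end CubeBoundary

section PiLp

variable (p : ENNReal) {ι : Type*} [Fintype ι]

def dotCLM (z : ι → ℝ) : StrongDual ℝ (PiLp p (fun _ : ι => ℝ)) :=
  ∑ i, z i • PiLp.proj p (fun _ : ι => ℝ) i

variable {p}

@[simp]
theorem dotCLM_apply (z : ι → ℝ) (x : PiLp p (fun _ : ι => ℝ)) :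
    dotCLM p z x = ∑ i, z i * x i := by
  simp [dotCLM]

theorem dotCLM_sub (z w : ι → ℝ) : dotCLM p (z - w) = dotCLM p z - dotCLM p w := by
  ext x
  simp [sub_mul, Finset.sum_sub_distrib]

theorem dotCLM_smul (k : ℝ) (z : ι → ℝ) : dotCLM p (k • z) = k • dotCLM p z := by
  ext x
  simp [Finset.mul_sum, mul_assoc]

theorem eq_dotCLM [DecidableEq ι] (g : StrongDual ℝ (PiLp p (fun _ : ι => ℝ))) :
    g = dotCLM p (fun i => g (PiLp.single p i 1)) := by
  refine ContinuousLinearMap.coe_injective ((PiLp.basisFun p ℝ ι).ext fun j => ?_)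
  simp

variable [Fact (1 ≤ p)]

theorem norm_dotCLM_le (z : ι → ℝ) : ‖dotCLM p z‖ ≤ ∑ i, |z i| := by
  refine ContinuousLinearMap.opNorm_le_bound _ (by positivity) fun x => ?_
  rw [dotCLM_apply, Finset.sum_mul]
  refine (Finset.abs_sum_le_sum_abs _ _).trans (Finset.sum_le_sum fun i _ => ?_)
  rw [abs_mul]
  exact mul_le_mul_of_nonneg_left (PiLp.norm_apply_le x i) (abs_nonneg _)

theorem abs_apply_single_le [DecidableEq ι] (g : StrongDual ℝ (PiLp p (fun _ : ι => ℝ))) (i : ι) :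
    |g (PiLp.single p i 1)| ≤ ‖g‖ := by
  simpa [PiLp.norm_single] using g.le_opNorm (PiLp.single p i 1)

theorem norm_dotCLM_round_sub_le (b : ι → ℝ) :
    ‖dotCLM p (fun j => (round (b j) : ℝ)) - dotCLM p b‖ ≤ Fintype.card ι / 2 := by
  rw [← dotCLM_sub]
  refine (norm_dotCLM_le _).trans ?_
  calc ∑ j, |(round (b j) : ℝ) - b j| ≤ ∑ _j : ι, (1 / 2 : ℝ) :=
        Finset.sum_le_sum fun j _ => by rw [abs_sub_comm]; exact abs_sub_round (b j)
    _ = Fintype.card ι / 2 := by simp [div_eq_mul_inv]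

theorem round_mem_cubeBoundary [DecidableEq ι] {M : ℕ} {b : ι → ℝ} (hb : ∀ j, |b j| ≤ M) (i : ι)
    (hi : |b i| = M) : (fun j => round (b j)) ∈ cubeBoundary ι M := by
  refine mem_cubeBoundary (fun j => abs_round_le (by exact_mod_cast hb j)) i ?_
  rcases abs_eq (Nat.cast_nonneg M) |>.mp hi with h | h
  · rw [h, ← Int.cast_natCast, round_intCast, abs_of_nonneg (Int.natCast_nonneg M)]
  · rw [h, ← Int.cast_natCast, ← Int.cast_neg, round_intCast, abs_neg,
      abs_of_nonneg (Int.natCast_nonneg M)]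

theorem exists_cubeBoundary_near_smul [DecidableEq ι] (M : ℕ)
    {g : StrongDual ℝ (PiLp p (fun _ : ι => ℝ))} (hg : g ≠ 0) :
    ∃ z ∈ cubeBoundary ι M, ∃ k : ℝ, 0 ≤ k ∧ M ≤ k * ‖g‖ ∧
      ‖dotCLM p (fun j => (z j : ℝ)) - k • g‖ ≤ Fintype.card ι / 2 := by
  set a : ι → ℝ := fun i => g (PiLp.single p i 1)
  have hga : g = dotCLM p a := eq_dotCLM g
  have ha : a ≠ 0 := fun h => hg (by rw [hga, h]; ext; simp)
  have : Nonempty ι := by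
    by_contra hι
    exact ha (funext fun j => (not_nonempty_iff.mp hι).elim j)
  obtain ⟨i, hi⟩ := Finite.exists_max fun j => |a j|
  have hai : 0 < |a i| := by
    by_contra! h
    exact ha (funext fun j => abs_nonpos_iff.mp ((hi j).trans h))
  -- rescaling makes the largest coefficient `±M`, so the rounded vector lies on a face
  set k : ℝ := M / |a i|
  have hkai : k * |a i| = M := div_mul_cancel₀ _ hai.ne'
  refine ⟨_, round_mem_cubeBoundary (b := k • a) (fun j => ?_) i ?_, k, by positivity, ?_, ?_⟩
  · rw [Pi.smul_apply, smul_eq_mul, abs_mul, abs_of_nonneg (by positivity), ← hkai]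
    exact mul_le_mul_of_nonneg_left (hi j) (by positivity)
  · rw [Pi.smul_apply, smul_eq_mul, abs_mul, abs_of_nonneg (by positivity), hkai]
  · rw [← hkai]
    exact mul_le_mul_of_nonneg_left (abs_apply_single_le g i) (by positivity)
  · rw [hga, ← dotCLM_smul]
    exact norm_dotCLM_round_sub_le _

theorem exists_isNormingSet_card_le_cubeBoundary [DecidableEq ι] {M : ℕ} {ε : ℝ} (hε : 0 ≤ ε)
    (hM : (2 + ε) * Fintype.card ι ≤ 2 * ε * M) :
    ∃ U : Finset (StrongDual ℝ (PiLp p (fun _ : ι => ℝ))),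
      IsNormingSet U ε ∧ U.card ≤ (cubeBoundary ι M).card := by
  classical
  set φ : (ι → ℤ) → StrongDual ℝ (PiLp p (fun _ : ι => ℝ)) := fun z => dotCLM p (fun j => z j)
  refine ⟨(cubeBoundary ι M).image fun z => ‖φ z‖⁻¹ • φ z, ⟨?_, fun v hv => ?_⟩,
    Finset.card_image_le⟩
  · simp only [Finset.mem_image, forall_exists_index, and_imp]
    rintro _ z - rfl
    rw [norm_smul, norm_inv, norm_norm]
    exact inv_mul_le_one_of_le₀ le_rfl (norm_nonneg _)
  have : Nonempty ι := by
    by_contra hι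
    have := not_nonempty_iff.mp hι
    exact hv (Subsingleton.eq_zero v)
  obtain ⟨g, hg1, hgv⟩ := exists_dual_vector ℝ v (norm_ne_zero_iff.mpr hv)
  obtain ⟨z, hz, k, hk0, hMk, hnear⟩ :=
    exists_cubeBoundary_near_smul (p := p) M (g := g) (norm_ne_zero_iff.mp (by simp [hg1]))
  rw [hg1, mul_one] at hMk
  have hnorm : ‖k • g‖ = k := by rw [norm_smul, hg1, Real.norm_of_nonneg hk0, mul_one]
  have hcard : (1 : ℝ) ≤ Fintype.card ι := by exact_mod_cast Fintype.card_pos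
  refine ⟨_, Finset.mem_image_of_mem _ hz, norm_le_mul_normalize_apply hε ?_ ?_ hnear ?_⟩
  · rw [hnorm, smul_apply, hgv, smul_eq_mul]; rfl
  · rw [hnorm]; nlinarith
  · rw [hnorm]; nlinarith

theorem exists_isNormingSet_piLp [DecidableEq ι] {ε : ℝ} (hε0 : 0 < ε) (hε1 : ε ≤ 1) :
    ∃ U : Finset (StrongDual ℝ (PiLp p (fun _ : ι => ℝ))), IsNormingSet U ε ∧
      (U.card : ℝ) ≤ Fintype.card ι * 2 * (7 * Fintype.card ι / ε) ^ (Fintype.card ι - 1) := by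
  set n := Fintype.card ι
  set M := ⌈2 * n / ε⌉₊
  have hM : (2 * n / ε : ℝ) ≤ M := Nat.le_ceil _
  have hM' : (2 + ε) * n ≤ 2 * ε * M := by
    rw [div_le_iff₀ hε0] at hM
    nlinarith [(Nat.cast_nonneg n : (0 : ℝ) ≤ n)]
  obtain ⟨U, hU, hUcard⟩ := exists_isNormingSet_card_le_cubeBoundary (p := p) hε0.le hM'
  refine ⟨U, hU, ?_⟩
  calc (U.card : ℝ) ≤ n * 2 * (2 * M + 1) ^ (n - 1) := by
        exact_mod_cast hUcard.trans (card_cubeBoundary_le M)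
    _ ≤ n * 2 * (7 * n / ε) ^ (n - 1) := by
        rcases Nat.eq_zero_or_pos n with hn | hn
        · simp [hn]
        have hn1 : (1 : ℝ) ≤ n := by exact_mod_cast hn
        have hMlt : (M : ℝ) < 2 * n / ε + 1 := Nat.ceil_lt_add_one (by positivity)
        have h3 : (3 : ℝ) ≤ 3 * n / ε := by
          rw [le_div_iff₀ hε0]; nlinarith
        gcongr
        calc (2 * M + 1 : ℝ) ≤ 2 * (2 * n / ε + 1) + 1 := by linarith
          _ ≤ 7 * n / ε := by
            have : 2 * (2 * n / ε + 1) + 1 = 4 * n / ε + 3 := by ring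
            have : 7 * n / ε = 4 * n / ε + 3 * n / ε := by ring
            linarith

end PiLp

theorem mul_two_mul_div_pow_le (d : ℕ) {ε : ℝ} (hε0 : 0 < ε) (hε1 : ε ≤ 1) :
    (d : ℝ) * 2 * (7 * d / ε) ^ (d - 1) ≤
      (d : ℝ) * (2 * 7 ^ (d - 1) * (d : ℝ) ^ (((d : ℝ) - 1) / 4 + 1)) ^ (d + 1) *
        ε ^ (-(((d : ℝ) ^ 2 - 1) / 2)) := by
  rcases Nat.eq_zero_or_pos d with rfl | hd
  · simp
  have hd1 : (1 : ℝ) ≤ d := by exact_mod_cast hd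
  set A : ℝ := 2 * 7 ^ (d - 1) * (d : ℝ) ^ (((d : ℝ) - 1) / 4 + 1)
  have h7 : (1 : ℝ) ≤ 2 * 7 ^ (d - 1) := by
    have : (1 : ℝ) ≤ 7 ^ (d - 1) := one_le_pow₀ (by norm_num)
    linarith
  have hdpow : (d : ℝ) ≤ (d : ℝ) ^ (((d : ℝ) - 1) / 4 + 1) := by
    conv_lhs => rw [← Real.rpow_one (d : ℝ)]
    exact Real.rpow_le_rpow_of_exponent_le hd1 (by linarith)
  have hA7 : 2 * 7 ^ (d - 1) ≤ A := le_mul_of_one_le_right (by positivity) (hd1.trans hdpow)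
  have hAd : (d : ℝ) ≤ A := (le_mul_of_one_le_left (by positivity) h7).trans
    (mul_le_mul_of_nonneg_left hdpow (by positivity))
  have hconst : 2 * 7 ^ (d - 1) * (d : ℝ) ^ (d - 1) ≤ A ^ (d + 1) := calc
    2 * 7 ^ (d - 1) * (d : ℝ) ^ (d - 1) ≤ A * A ^ (d - 1) := by gcongr
    _ = A ^ d := by rw [← pow_succ', Nat.sub_add_cancel hd]
    _ ≤ A ^ (d + 1) := pow_le_pow_right₀ (h7.trans hA7) (Nat.le_succ d)
  have hpow : (ε ^ (d - 1))⁻¹ ≤ ε ^ (-(((d : ℝ) ^ 2 - 1) / 2)) := by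
    rw [← Real.rpow_natCast, ← Real.rpow_neg hε0.le, Nat.cast_sub hd, Nat.cast_one]
    exact Real.rpow_le_rpow_of_exponent_ge hε0 hε1 (by nlinarith)
  calc (d : ℝ) * 2 * (7 * d / ε) ^ (d - 1)
      = d * (2 * 7 ^ (d - 1) * (d : ℝ) ^ (d - 1)) * (ε ^ (d - 1))⁻¹ := by
        rw [div_pow, mul_pow]; ring
    _ ≤ d * A ^ (d + 1) * ε ^ (-(((d : ℝ) ^ 2 - 1) / 2)) := by gcongr

theorem stmt_15_general (d : ℕ) (p : ENNReal) [Fact (1 ≤ p)]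
    (X : Finset (PiLp p (fun _ : Fin d => ℝ))) (ε : ℝ) (hε0 : 0 < ε) (hε1 : ε < 1) :
    ∃ H : ℝ → SimpleGraph {x // x ∈ X},
      (∀ r s : ℝ, 0 ≤ r → r ≤ s → H r ≤ H s) ∧
      ∀ r : ℝ, 0 ≤ r →
        (∀ x y : {x // x ∈ X}, x ≠ y → dist x.1 y.1 ≤ 2 * r → (H r).Adj x y) ∧
        (∀ x y : {x // x ∈ X}, (H r).Adj x y → dist x.1 y.1 ≤ 2 * ((1 + ε) * r)) ∧
        ((Set.ncard {S : Set {x // x ∈ X} | S.Nonempty ∧ (H r).IsClique S ∧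
            ∀ T : Set {x // x ∈ X}, (H r).IsClique T → S ⊆ T → S = T} : ℝ) ≤
          (X.card : ℝ) ^
            ((d : ℝ) * (2 * 7 ^ (d - 1) * (d : ℝ) ^ (((d : ℝ) - 1) / 4 + 1)) ^ (d + 1) *
              ε ^ (-(((d : ℝ) ^ 2 - 1) / 2)))) := by
  obtain ⟨U, hU, hUcard⟩ := exists_isNormingSet_piLp (p := p) (ι := Fin d) hε0 hε1.le
  rw [Fintype.card_fin] at hUcard
  refine ⟨normingGraph U X, fun r s _ hrs => normingGraph_mono U X hrs, fun r hr =>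
    ⟨fun x y hxy h => normingGraph_adj_of_dist_le U X hU.1 hxy h,
      fun x y h => dist_le_of_normingGraph_adj U X hU hε0.le h, ?_⟩⟩
  rcases Nat.eq_zero_or_pos X.card with hX | hX
  · have : IsEmpty X := Finset.isEmpty_coe_sort.mpr (Finset.card_eq_zero.mp hX)
    have hnone : ∀ S : Set X, ¬S.Nonempty := fun _ ⟨x, _⟩ => isEmptyElim x
    simp only [hnone, false_and, Set.ofPred_false, Set.ncard_empty, Nat.cast_zero]
    positivity
  calc _ ≤ ((X.card ^ U.card : ℕ) : ℝ) := by
        exact_mod_cast ncard_maximalCliques_normingGraph_le U X hr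
    _ = (X.card : ℝ) ^ (U.card : ℝ) := by rw [Nat.cast_pow, Real.rpow_natCast]
    _ ≤ _ := Real.rpow_le_rpow_of_exponent_le (by exact_mod_cast hX)
        (hUcard.trans (mul_two_mul_div_pow_le d hε0 hε1.le))

/-- For `d ≥ 2`, `p ∈ [1,∞]`, a finite set `X ⊆ ℝ^d` with the `ℓ_p` metric, and
`ε ∈ (0,1)`: setting `c_d = d·(2·7^{d−1}·d^{(d−1)/4+1})^{d+1}` and
`β = c_d·ε^{−(d²−1)/2}`, there is a monotone family of graphs `(H_r)_{r ≥ 0}` on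
vertex set `X` such that `G(X)_r ⊆ H_r ⊆ G(X)_{(1+ε)r}` and each `H_r` has at most
`|X|^β` maximal cliques. -/
theorem stmt_15 (d : ℕ) (hd : 2 ≤ d) (p : ENNReal) [Fact (1 ≤ p)]
    (X : Finset (PiLp p (fun _ : Fin d => ℝ))) (ε : ℝ) (hε0 : 0 < ε) (hε1 : ε < 1) :
    ∃ H : ℝ → SimpleGraph {x // x ∈ X},
      (∀ r s : ℝ, 0 ≤ r → r ≤ s → H r ≤ H s) ∧
      ∀ r : ℝ, 0 ≤ r →
        (∀ x y : {x // x ∈ X}, x ≠ y → dist x.1 y.1 ≤ 2 * r → (H r).Adj x y) ∧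
        (∀ x y : {x // x ∈ X}, (H r).Adj x y → dist x.1 y.1 ≤ 2 * ((1 + ε) * r)) ∧
        ((Set.ncard {S : Set {x // x ∈ X} | S.Nonempty ∧ (H r).IsClique S ∧
            ∀ T : Set {x // x ∈ X}, (H r).IsClique T → S ⊆ T → S = T} : ℝ) ≤
          (X.card : ℝ) ^
            ((d : ℝ) * (2 * 7 ^ (d - 1) * (d : ℝ) ^ (((d : ℝ) - 1) / 4 + 1)) ^ (d + 1) *
              ε ^ (-(((d : ℝ) ^ 2 - 1) / 2)))) :=
  stmt_15_general d p X ε hε0 hε1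
end
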